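/- Let (X,Y,Z) be finite random variables and T(X) a conditionally sufficient statistic for Z given Y, i.e., Z–(T(X),Y)–(X,Y) is a Markov chain. Then the remote rate-distortion function with encoder observing (X,Y) and decoder side information Y equals the one with encoder observing (T(X),Y): R(D) = min_{p(u|x,y), f: E d(Z,f(U,Y)) ≤ D} I(X;U|Y) equals R'(D) = min_{p(u|t,y), f: E d(Z,f(U,Y)) ≤ D} I(T(X);U|Y). -/

import Mathlib

open scoped Classical BigOperators

/-- Probability of a set of outcomes under a pmf `p` on a finite sample space. -/
noncomputable def pr {Ω : Type*} [Fintype Ω] (p : Ω → ℝ) (s : Set Ω) : ℝ :=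
  ∑ ω, if ω ∈ s then p ω else 0

/-- `p` is a probability mass function on the finite sample space `Ω`. -/
def IsPMF {Ω : Type*} [Fintype Ω] (p : Ω → ℝ) : Prop :=
  (∀ ω, 0 ≤ p ω) ∧ (∑ ω, p ω) = 1

/-- The Markov chain `A – B – C`: `A` and `C` are conditionally independent given `B`. -/
def MarkovChain {Ω α β γ : Type*} [Fintype Ω] (p : Ω → ℝ)
    (A : Ω → α) (B : Ω → β) (C : Ω → γ) : Prop :=
  ∀ (a : α) (b : β) (c : γ),
    pr p {ω | A ω = a ∧ B ω = b ∧ C ω = c} * pr p {ω | B ω = b} =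
      pr p {ω | A ω = a ∧ B ω = b} * pr p {ω | B ω = b ∧ C ω = c}

/-- Conditional Shannon entropy `H(A | B)`. -/
noncomputable def condEnt {Ω α β : Type*} [Fintype Ω] [Fintype α] [Fintype β]
    (p : Ω → ℝ) (A : Ω → α) (B : Ω → β) : ℝ :=
  -∑ a : α, ∑ b : β,
    pr p {ω | A ω = a ∧ B ω = b} *
      Real.log (pr p {ω | A ω = a ∧ B ω = b} / pr p {ω | B ω = b})

/-- Mutual information `I(A ; B)`. -/
noncomputable def mutInfo {Ω α β : Type*} [Fintype Ω] [Fintype α] [Fintype β]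
    (p : Ω → ℝ) (A : Ω → α) (B : Ω → β) : ℝ :=
  ∑ a : α, ∑ b : β,
    pr p {ω | A ω = a ∧ B ω = b} *
      Real.log (pr p {ω | A ω = a ∧ B ω = b} /
        (pr p {ω | A ω = a} * pr p {ω | B ω = b}))

/-- Conditional mutual information `I(A ; B | C) = H(A|C) - H(A|B,C)`. -/
noncomputable def condMI {Ω α β γ : Type*} [Fintype Ω] [Fintype α] [Fintype β] [Fintype γ]
    (p : Ω → ℝ) (A : Ω → α) (B : Ω → β) (C : Ω → γ) : ℝ :=
  condEnt p A C - condEnt p A (fun ω => (B ω, C ω))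

/-!
Let `q` be any test channel admissible for the encoder that sees `(X, Y)`, and re-draw `U` from
`q(u | T x, y)`. Under `q`, the sufficiency chain `Z – (T X, Y) – (X, Y)` and the encoder chain
`Z – (X, Y) – U` contract to `Z – (T X, Y) – U`; the re-drawn distribution satisfies the same
chain and has the same `(Z, T X, Y)` and `(T X, Y, U)` marginals, so the joint law of
`(Z, T X, Y, U)` is unchanged. Hence so are the distortion and `I(T X; U | Y)`, which is at most
`I(X; U | Y)` by data processing. Conversely, an encoder that only sees `(T X, Y)` is admissible
for `(X, Y)`, and the chain rule gives `I(X; U | Y) = I(T X; U | Y)` for it. Every rate of either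
problem is thus at least some rate of the other, so the infima agree.
-/

section Probability

variable {Ω α β γ δ : Type*} [Fintype Ω] {p : Ω → ℝ}

lemma pr_nonneg (hp : ∀ ω, 0 ≤ p ω) (s : Set Ω) : 0 ≤ pr p s :=
  Finset.sum_nonneg fun ω _ => by split_ifs <;> simp [hp ω]

lemma pr_mono (hp : ∀ ω, 0 ≤ p ω) {s t : Set Ω} (hst : s ⊆ t) : pr p s ≤ pr p t :=
  Finset.sum_le_sum fun ω _ => by
    by_cases hs : ω ∈ s
    · simp [hs, hst hs]
    · simp only [hs, if_false]
      split_ifs <;> simp [hp ω]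

lemma pr_eq_zero_of_subset (hp : ∀ ω, 0 ≤ p ω) {s t : Set Ω} (ht : pr p t = 0)
    (hst : s ⊆ t) : pr p s = 0 :=
  le_antisymm (ht ▸ pr_mono hp hst) (pr_nonneg hp s)

lemma pr_point (ω₀ : Ω) : pr p {ω | ω = ω₀} = p ω₀ := by
  simp [pr]

lemma pr_eq_zero_of_forall_notMem {s : Set Ω} (h : ∀ ω, ω ∉ s) : pr p s = 0 := by
  simp [pr, h]

lemma pr_ne_zero_of_subset (hp : ∀ ω, 0 ≤ p ω) {s t : Set Ω} (hs : pr p s ≠ 0)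
    (hst : s ⊆ t) : pr p t ≠ 0 :=
  fun ht => hs (pr_eq_zero_of_subset hp ht hst)

lemma sum_pr_and [Fintype α] (A : Ω → α) (P : Ω → Prop) :
    ∑ a, pr p {ω | A ω = a ∧ P ω} = pr p {ω | P ω} := by
  unfold pr
  rw [Finset.sum_comm]
  refine Finset.sum_congr rfl fun ω _ => ?_
  by_cases hP : P ω <;> simp [hP]

lemma sum_pr_and_mid [Fintype β] (B : Ω → β) (P Q : Ω → Prop) :
    ∑ b, pr p {ω | P ω ∧ B ω = b ∧ Q ω} = pr p {ω | P ω ∧ Q ω} := by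
  rw [← sum_pr_and B]
  refine Finset.sum_congr rfl fun b _ => ?_
  congr 1; ext ω; simp only [Set.mem_ofPred_eq]; tauto

lemma sum_pr_and_right [Fintype γ] (C : Ω → γ) (P : Ω → Prop) :
    ∑ c, pr p {ω | P ω ∧ C ω = c} = pr p {ω | P ω} := by
  rw [← sum_pr_and C]
  refine Finset.sum_congr rfl fun c _ => ?_
  congr 1; ext ω; simp only [Set.mem_ofPred_eq]; tauto

lemma sum_pr_and_last [Fintype γ] (C : Ω → γ) (P Q : Ω → Prop) :
    ∑ c, pr p {ω | P ω ∧ Q ω ∧ C ω = c} = pr p {ω | P ω ∧ Q ω} := by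
  rw [← sum_pr_and C]
  refine Finset.sum_congr rfl fun c _ => ?_
  congr 1; ext ω; simp only [Set.mem_ofPred_eq]; tauto

lemma sum_pr_eq_one [Fintype α] (hp : IsPMF p) (A : Ω → α) : ∑ a, pr p {ω | A ω = a} = 1 := by
  have h := sum_pr_and (p := p) A fun _ => True
  simp only [and_true] at h
  rw [h, ← hp.2]
  simp [pr]

lemma pr_comp_eq_sum [Fintype γ] (C : Ω → γ) (g : γ → δ) (d : δ) (P : Ω → Prop) :
    pr p {ω | g (C ω) = d ∧ P ω} = ∑ c, if g c = d then pr p {ω | C ω = c ∧ P ω} else 0 := by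
  rw [← sum_pr_and C]
  refine Finset.sum_congr rfl fun c _ => ?_
  split_ifs with h
  · congr 1; ext ω; simp only [Set.mem_ofPred_eq]; aesop
  · exact pr_eq_zero_of_forall_notMem fun ω hω => h (hω.1 ▸ hω.2.1)

lemma sum_mul_comp_eq_sum_pr (V : Ω → β) [Fintype β] (G : β → ℝ) :
    ∑ ω, p ω * G (V ω) = ∑ v, pr p {ω | V ω = v} * G v := by
  simp only [pr, Finset.sum_mul, ite_mul, zero_mul]
  rw [Finset.sum_comm]
  refine Finset.sum_congr rfl fun ω _ => ?_
  simp

/-- `P(A = a | B = b)`, with the junk value `0` when `P(B = b) = 0`. -/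
noncomputable def condPr (p : Ω → ℝ) (A : Ω → α) (B : Ω → β) (a : α) (b : β) : ℝ :=
  pr p {ω | A ω = a ∧ B ω = b} / pr p {ω | B ω = b}

lemma condPr_nonneg (hp : ∀ ω, 0 ≤ p ω) (A : Ω → α) (B : Ω → β) (a : α) (b : β) :
    0 ≤ condPr p A B a b :=
  div_nonneg (pr_nonneg hp _) (pr_nonneg hp _)

lemma sum_condPr [Fintype α] (A : Ω → α) (B : Ω → β) {b : β} (hb : pr p {ω | B ω = b} ≠ 0) :
    ∑ a, condPr p A B a b = 1 := by
  simp only [condPr]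
  rw [← Finset.sum_div, sum_pr_and, div_self hb]

end Probability

section Markov

variable {Ω α β γ δ : Type*} [Fintype Ω] {p : Ω → ℝ} {A : Ω → α} {B : Ω → β} {C : Ω → γ}

lemma MarkovChain.symm (h : MarkovChain p A B C) : MarkovChain p C B A := fun c b a => by
  have h' := h a b c
  simp only [and_comm, and_assoc] at h' ⊢
  linarith

lemma MarkovChain.pr_eq_condPr_mul (hp : ∀ ω, 0 ≤ p ω) (h : MarkovChain p A B C)
    (a : α) (b : β) (c : γ) :
    pr p {ω | A ω = a ∧ B ω = b ∧ C ω = c} = condPr p A B a b * pr p {ω | B ω = b ∧ C ω = c} := by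
  by_cases hb : pr p {ω | B ω = b} = 0
  · rw [pr_eq_zero_of_subset hp hb (fun ω hω => hω.2.1),
      pr_eq_zero_of_subset hp hb (fun ω hω => hω.1), mul_zero]
  · rw [condPr, div_mul_eq_mul_div, eq_div_iff hb, h a b c]

lemma pr_eq_mul_of_forall_pr_eq_mul [Fintype γ] {κ : ℝ} {a : α} {b : β}
    (h : ∀ c, pr p {ω | A ω = a ∧ B ω = b ∧ C ω = c} = κ * pr p {ω | B ω = b ∧ C ω = c}) :
    pr p {ω | A ω = a ∧ B ω = b} = κ * pr p {ω | B ω = b} := by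
  rw [← sum_pr_and_last C, ← sum_pr_and_right C, Finset.mul_sum]
  exact Finset.sum_congr rfl fun c _ => h c

lemma markovChain_of_forall_pr_eq_mul [Fintype γ] (κ : α → β → ℝ)
    (h : ∀ a b c, pr p {ω | A ω = a ∧ B ω = b ∧ C ω = c} = κ a b * pr p {ω | B ω = b ∧ C ω = c}) :
    MarkovChain p A B C := by
  intro a b c
  rw [h, pr_eq_mul_of_forall_pr_eq_mul (h a b)]
  ring

lemma MarkovChain.comp_right [Fintype γ] [Fintype δ] (hp : ∀ ω, 0 ≤ p ω)
    (h : MarkovChain p A B C) (g : γ → δ) : MarkovChain p A B (fun ω => g (C ω)) := by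
  refine markovChain_of_forall_pr_eq_mul (condPr p A B) fun a b d => ?_
  have e₁ : pr p {ω | A ω = a ∧ B ω = b ∧ g (C ω) = d} =
      pr p {ω | g (C ω) = d ∧ (A ω = a ∧ B ω = b)} := by
    congr 1; ext ω; simp only [Set.mem_ofPred_eq]; tauto
  have e₂ : pr p {ω | B ω = b ∧ g (C ω) = d} = pr p {ω | g (C ω) = d ∧ B ω = b} := by
    simp only [and_comm]
  rw [e₁, e₂, pr_comp_eq_sum, pr_comp_eq_sum, Finset.mul_sum]
  refine Finset.sum_congr rfl fun c _ => ?_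
  split_ifs
  · convert h.pr_eq_condPr_mul hp a b c using 2 <;> simp only [and_comm, and_assoc]
  · rw [mul_zero]

lemma MarkovChain.refine_middle {ε : Type*} [Fintype ε] {W : Ω → ε} (hp : ∀ ω, 0 ≤ p ω)
    (m : ε → γ) (k : γ → β) (h : MarkovChain p A (fun ω => k (m (W ω))) W) :
    MarkovChain p A (fun ω => m (W ω)) W := by
  refine markovChain_of_forall_pr_eq_mul
    (fun a c => condPr p A (fun ω => k (m (W ω))) a (k c)) fun a c w => ?_
  by_cases hw : m w = c
  · have e₁ : pr p {ω | A ω = a ∧ m (W ω) = c ∧ W ω = w} =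
        pr p {ω | A ω = a ∧ k (m (W ω)) = k c ∧ W ω = w} := by
      congr 1; ext ω; simp only [Set.mem_ofPred_eq]; aesop
    have e₂ : pr p {ω | m (W ω) = c ∧ W ω = w} = pr p {ω | k (m (W ω)) = k c ∧ W ω = w} := by
      congr 1; ext ω; simp only [Set.mem_ofPred_eq]; aesop
    rw [e₁, e₂]
    exact h.pr_eq_condPr_mul hp a (k c) w
  · rw [pr_eq_zero_of_forall_notMem (s := {ω | A ω = a ∧ m (W ω) = c ∧ W ω = w})
        fun ω hω => hw (hω.2.2 ▸ hω.2.1),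
      pr_eq_zero_of_forall_notMem (s := {ω | m (W ω) = c ∧ W ω = w})
        fun ω hω => hw (hω.2 ▸ hω.1), mul_zero]

lemma MarkovChain.contraction [Fintype γ] [Fintype δ] {D : Ω → δ} (hp : ∀ ω, 0 ≤ p ω)
    (k : γ → β) (h₁ : MarkovChain p A C D) (h₂ : MarkovChain p A (fun ω => k (C ω)) C) :
    MarkovChain p A (fun ω => k (C ω)) (fun ω => (C ω, D ω)) := by
  refine markovChain_of_forall_pr_eq_mul (condPr p A fun ω => k (C ω)) fun a b ⟨c, d⟩ => ?_
  by_cases hc : k c = b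
  · subst hc
    have e₁ : pr p {ω | A ω = a ∧ k (C ω) = k c ∧ (C ω, D ω) = (c, d)} =
        pr p {ω | A ω = a ∧ C ω = c ∧ D ω = d} := by
      congr 1; ext ω; simp only [Set.mem_ofPred_eq, Prod.mk.injEq]; aesop
    have e₂ : pr p {ω | k (C ω) = k c ∧ (C ω, D ω) = (c, d)} = pr p {ω | C ω = c ∧ D ω = d} := by
      congr 1; ext ω; simp only [Set.mem_ofPred_eq, Prod.mk.injEq]; aesop
    have hAC := h₂.pr_eq_condPr_mul hp a (k c) c
    rw [show {ω | A ω = a ∧ k (C ω) = k c ∧ C ω = c} = {ω | A ω = a ∧ C ω = c} by aesop,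
      show {ω | k (C ω) = k c ∧ C ω = c} = {ω | C ω = c} by aesop] at hAC
    rw [e₁, e₂]
    by_cases h0 : pr p {ω | C ω = c} = 0
    · rw [pr_eq_zero_of_subset hp h0 (fun ω hω => hω.2.1),
        pr_eq_zero_of_subset hp h0 (fun ω hω => hω.1), mul_zero]
    · apply mul_right_cancel₀ h0
      rw [h₁ a c d, hAC]
      ring
  · rw [pr_eq_zero_of_forall_notMem fun ω hω => hc (by rw [← (Prod.mk.inj hω.2.2).1]; exact hω.2.1),
      pr_eq_zero_of_forall_notMem fun ω hω => hc (by rw [← (Prod.mk.inj hω.2).1]; exact hω.1),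
      mul_zero]

lemma MarkovChain.pr_eq_of_pr_eq [Fintype α] {q : Ω → ℝ} (hp : ∀ ω, 0 ≤ p ω)
    (hq : ∀ ω, 0 ≤ q ω) (hP : MarkovChain p A B C) (hQ : MarkovChain q A B C)
    (hAB : ∀ a b, pr p {ω | A ω = a ∧ B ω = b} = pr q {ω | A ω = a ∧ B ω = b})
    (hBC : ∀ b c, pr p {ω | B ω = b ∧ C ω = c} = pr q {ω | B ω = b ∧ C ω = c})
    (a : α) (b : β) (c : γ) :
    pr p {ω | A ω = a ∧ B ω = b ∧ C ω = c} = pr q {ω | A ω = a ∧ B ω = b ∧ C ω = c} := by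
  have hB : pr p {ω | B ω = b} = pr q {ω | B ω = b} := by
    rw [← sum_pr_and A, ← sum_pr_and A]
    exact Finset.sum_congr rfl fun a _ => hAB a b
  rw [hP.pr_eq_condPr_mul hp, hQ.pr_eq_condPr_mul hq, condPr, condPr, hAB, hB, hBC]

lemma MarkovChain.preimage {Ω' : Type*} [Fintype Ω'] {q : Ω' → ℝ} (π : Ω' → Ω)
    (hπ : ∀ s, pr q (π ⁻¹' s) = pr p s) (h : MarkovChain p A B C) :
    MarkovChain q (fun ω => A (π ω)) (fun ω => B (π ω)) (fun ω => C (π ω)) := by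
  intro a b c
  have := h a b c
  rw [← hπ, ← hπ, ← hπ, ← hπ] at this
  exact this

end Markov

lemma log_div_mul_div {x a b c : ℝ} (hx : x ≠ 0) (ha : a ≠ 0) (hb : b ≠ 0) (hc : c ≠ 0) :
    Real.log (x / (a * b / c)) = Real.log x - Real.log a - Real.log b + Real.log c := by
  rw [Real.log_div hx (div_ne_zero (mul_ne_zero ha hb) hc), Real.log_div (mul_ne_zero ha hb) hc,
    Real.log_mul ha hb]
  ring

lemma sub_le_mul_log_div {x y : ℝ} (hx : 0 ≤ x) (hy : 0 ≤ y) (hxy : y = 0 → x = 0) :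
    x - y ≤ x * Real.log (x / y) := by
  rcases hy.eq_or_lt with rfl | hy
  · simp [hxy rfl]
  · calc x - y = y * (x / y - 1) := by field_simp
      _ ≤ y * (x / y * Real.log (x / y)) := by
        gcongr; exact Real.self_sub_one_le_mul_log (div_nonneg hx hy.le)
      _ = x * Real.log (x / y) := by field_simp

section ConditionalMutualInformation

variable {Ω α β γ : Type*} [Fintype Ω] [Fintype α] [Fintype β] [Fintype γ] {p : Ω → ℝ}

lemma condMI_eq_sum (hp : ∀ ω, 0 ≤ p ω) (A : Ω → α) (B : Ω → β) (C : Ω → γ) :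
    condMI p A B C = ∑ a, ∑ b, ∑ c, pr p {ω | A ω = a ∧ B ω = b ∧ C ω = c} *
      Real.log (pr p {ω | A ω = a ∧ B ω = b ∧ C ω = c} /
        (pr p {ω | A ω = a ∧ C ω = c} * pr p {ω | B ω = b ∧ C ω = c} / pr p {ω | C ω = c})) := by
  have hEnt : ∀ a, ∑ c, pr p {ω | A ω = a ∧ C ω = c} *
      Real.log (pr p {ω | A ω = a ∧ C ω = c} / pr p {ω | C ω = c}) =
      ∑ b, ∑ c, pr p {ω | A ω = a ∧ B ω = b ∧ C ω = c} *
        Real.log (pr p {ω | A ω = a ∧ C ω = c} / pr p {ω | C ω = c}) := by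
    intro a
    rw [Finset.sum_comm]
    exact Finset.sum_congr rfl fun c _ => by rw [← Finset.sum_mul, sum_pr_and_mid]
  simp only [condMI, condEnt, Fintype.sum_prod_type, Prod.mk.injEq, hEnt]
  rw [neg_sub_neg, ← Finset.sum_sub_distrib]
  refine Finset.sum_congr rfl fun a _ => ?_
  rw [← Finset.sum_sub_distrib]
  refine Finset.sum_congr rfl fun b _ => ?_
  rw [← Finset.sum_sub_distrib]
  refine Finset.sum_congr rfl fun c _ => ?_
  by_cases hx : pr p {ω | A ω = a ∧ B ω = b ∧ C ω = c} = 0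
  · simp [hx]
  · have hAC' : pr p {ω | A ω = a ∧ C ω = c} ≠ 0 :=
      pr_ne_zero_of_subset hp hx (fun ω hω => ⟨hω.1, hω.2.2⟩)
    have hBC : pr p {ω | B ω = b ∧ C ω = c} ≠ 0 := pr_ne_zero_of_subset hp hx (fun ω hω => hω.2)
    have hC : pr p {ω | C ω = c} ≠ 0 := pr_ne_zero_of_subset hp hx (fun ω hω => hω.2.2)
    rw [Real.log_div hx hBC, Real.log_div hAC' hC, log_div_mul_div hx hAC' hBC hC]
    ring

lemma condMI_symm (hp : ∀ ω, 0 ≤ p ω) (A : Ω → α) (B : Ω → β) (C : Ω → γ) :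
    condMI p A B C = condMI p B A C := by
  rw [condMI_eq_sum hp, condMI_eq_sum hp, Finset.sum_comm]
  refine Finset.sum_congr rfl fun b _ => Finset.sum_congr rfl fun a _ =>
    Finset.sum_congr rfl fun c _ => ?_
  rw [show {ω | A ω = a ∧ B ω = b ∧ C ω = c} = {ω | B ω = b ∧ A ω = a ∧ C ω = c} by
      ext ω; simp only [Set.mem_ofPred_eq]; tauto,
    mul_comm (pr p {ω | A ω = a ∧ C ω = c})]

lemma condMI_nonneg (hp : IsPMF p) (A : Ω → α) (B : Ω → β) (C : Ω → γ) :
    0 ≤ condMI p A B C := by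
  have hmass : ∑ a, ∑ b, ∑ c, pr p {ω | A ω = a ∧ B ω = b ∧ C ω = c} = 1 := by
    rw [Finset.sum_comm]
    conv_lhs => arg 2; ext b; rw [Finset.sum_comm]
    simp only [sum_pr_and]
    rw [Finset.sum_comm]
    simp only [sum_pr_and, sum_pr_eq_one hp]
  have hprod : ∑ a, ∑ b, ∑ c, pr p {ω | A ω = a ∧ C ω = c} * pr p {ω | B ω = b ∧ C ω = c} /
      pr p {ω | C ω = c} = 1 := by
    conv_lhs => arg 2; ext a; rw [Finset.sum_comm]
    rw [Finset.sum_comm]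
    simp only [← Finset.sum_div, ← Finset.sum_mul_sum, sum_pr_and, mul_self_div_self,
      sum_pr_eq_one hp]
  -- Gibbs' inequality: termwise `a log (a / b) ≥ a - b`, and both `a` and `b` sum to one.
  rw [condMI_eq_sum hp.1]
  calc (0 : ℝ) = ∑ a, ∑ b, ∑ c, (pr p {ω | A ω = a ∧ B ω = b ∧ C ω = c} -
        pr p {ω | A ω = a ∧ C ω = c} * pr p {ω | B ω = b ∧ C ω = c} / pr p {ω | C ω = c}) := by
        simp only [Finset.sum_sub_distrib, hmass, hprod, sub_self]
    _ ≤ _ := by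
      gcongr with a _ b _ c _
      refine sub_le_mul_log_div (pr_nonneg hp.1 _)
        (div_nonneg (mul_nonneg (pr_nonneg hp.1 _) (pr_nonneg hp.1 _)) (pr_nonneg hp.1 _))
        fun h0 => ?_
      rcases div_eq_zero_iff.mp h0 with h0 | h0
      · rcases mul_eq_zero.mp h0 with h0 | h0
        · exact pr_eq_zero_of_subset hp.1 h0 fun ω hω => ⟨hω.1, hω.2.2⟩
        · exact pr_eq_zero_of_subset hp.1 h0 fun ω hω => hω.2
      · exact pr_eq_zero_of_subset hp.1 h0 fun ω hω => hω.2.2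

lemma condMI_congr {q : Ω → ℝ} {A : Ω → α} {B : Ω → β} {C : Ω → γ}
    (h : ∀ a b c, pr p {ω | A ω = a ∧ B ω = b ∧ C ω = c} =
      pr q {ω | A ω = a ∧ B ω = b ∧ C ω = c}) :
    condMI p A B C = condMI q A B C := by
  have hAC : ∀ a c, pr p {ω | A ω = a ∧ C ω = c} = pr q {ω | A ω = a ∧ C ω = c} := fun a c => by
    rw [← sum_pr_and_mid B, ← sum_pr_and_mid B]
    exact Finset.sum_congr rfl fun b _ => h a b c
  have hBC : ∀ b c, pr p {ω | B ω = b ∧ C ω = c} = pr q {ω | B ω = b ∧ C ω = c} := fun b c => by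
    rw [← sum_pr_and A, ← sum_pr_and A]
    exact Finset.sum_congr rfl fun a _ => h a b c
  have hC : ∀ c, pr p {ω | C ω = c} = pr q {ω | C ω = c} := fun c => by
    rw [← sum_pr_and A, ← sum_pr_and A]
    exact Finset.sum_congr rfl fun a _ => hAC a c
  simp only [condMI, condEnt, Fintype.sum_prod_type, Prod.mk.injEq, h, hAC, hBC, hC]

lemma condMI_eq_zero_of_markovChain (hp : ∀ ω, 0 ≤ p ω) {A : Ω → α} {B : Ω → β} {C : Ω → γ}
    (h : MarkovChain p A C B) : condMI p A B C = 0 := by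
  rw [condMI_eq_sum hp]
  refine Finset.sum_eq_zero fun a _ => Finset.sum_eq_zero fun b _ =>
    Finset.sum_eq_zero fun c _ => ?_
  by_cases hx : pr p {ω | A ω = a ∧ B ω = b ∧ C ω = c} = 0
  · rw [hx, zero_mul]
  · have hC : pr p {ω | C ω = c} ≠ 0 := pr_ne_zero_of_subset hp hx fun ω hω => hω.2.2
    have hm := h a c b
    simp only [and_comm] at hm ⊢
    rw [← hm, mul_div_cancel_right₀ _ hC, div_self hx, Real.log_one, mul_zero]

section ChainRule

variable {τ : Type*} [Fintype τ]

lemma sum_pr_comp_mul (X : Ω → α) (g : α → τ) (P Q : Ω → Prop) (F : τ → ℝ) :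
    ∑ t, pr p {ω | P ω ∧ g (X ω) = t ∧ Q ω} * F t =
      ∑ x, pr p {ω | P ω ∧ X ω = x ∧ Q ω} * F (g x) := by
  have h : ∀ t, pr p {ω | P ω ∧ g (X ω) = t ∧ Q ω} =
      ∑ x, if g x = t then pr p {ω | P ω ∧ X ω = x ∧ Q ω} else 0 := fun t => by
    rw [← sum_pr_and_mid X]
    refine Finset.sum_congr rfl fun x _ => ?_
    split_ifs with hx
    · congr 1; ext ω; simp only [Set.mem_ofPred_eq]; aesop
    · exact pr_eq_zero_of_forall_notMem fun ω hω => hx (hω.2.1 ▸ hω.2.2.1)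
  simp only [h, Finset.sum_mul, ite_mul, zero_mul]
  rw [Finset.sum_comm]
  simp

lemma condMI_comp_eq_sum (hp : ∀ ω, 0 ≤ p ω) (U : Ω → γ) (X : Ω → α) (Y : Ω → β) (g : α → τ) :
    condMI p U (fun ω => g (X ω)) Y = ∑ u, ∑ x, ∑ y, pr p {ω | U ω = u ∧ X ω = x ∧ Y ω = y} *
      Real.log (pr p {ω | U ω = u ∧ g (X ω) = g x ∧ Y ω = y} /
        (pr p {ω | U ω = u ∧ Y ω = y} * pr p {ω | g (X ω) = g x ∧ Y ω = y} /
          pr p {ω | Y ω = y})) := by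
  rw [condMI_eq_sum hp]
  refine Finset.sum_congr rfl fun u _ => ?_
  rw [Finset.sum_comm, Finset.sum_comm (γ := α)]
  exact Finset.sum_congr rfl fun y _ => sum_pr_comp_mul X g (fun ω => U ω = u)
    (fun ω => Y ω = y) fun t => Real.log (pr p {ω | U ω = u ∧ g (X ω) = t ∧ Y ω = y} /
      (pr p {ω | U ω = u ∧ Y ω = y} * pr p {ω | g (X ω) = t ∧ Y ω = y} / pr p {ω | Y ω = y}))

lemma condMI_cond_comp_eq_sum (hp : ∀ ω, 0 ≤ p ω) (U : Ω → γ) (X : Ω → α) (Y : Ω → β)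
    (g : α → τ) :
    condMI p U X (fun ω => (g (X ω), Y ω)) = ∑ u, ∑ x, ∑ y,
      pr p {ω | U ω = u ∧ X ω = x ∧ Y ω = y} *
        Real.log (pr p {ω | U ω = u ∧ X ω = x ∧ Y ω = y} /
          (pr p {ω | U ω = u ∧ g (X ω) = g x ∧ Y ω = y} * pr p {ω | X ω = x ∧ Y ω = y} /
            pr p {ω | g (X ω) = g x ∧ Y ω = y})) := by
  rw [condMI_eq_sum hp]
  refine Finset.sum_congr rfl fun u _ => Finset.sum_congr rfl fun x _ => ?_
  rw [Fintype.sum_prod_type, Finset.sum_eq_single (g x)]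
  · have hgx : ∀ ω y, (X ω = x ∧ g (X ω) = g x ∧ Y ω = y) ↔ (X ω = x ∧ Y ω = y) :=
      fun ω y => ⟨fun h => ⟨h.1, h.2.2⟩, fun h => ⟨h.1, by rw [h.1], h.2⟩⟩
    simp only [Prod.mk.injEq, hgx]
  · intro t _ ht
    refine Finset.sum_eq_zero fun y _ => ?_
    rw [pr_eq_zero_of_forall_notMem (s := {ω | U ω = u ∧ X ω = x ∧ (g (X ω), Y ω) = (t, y)})
      fun ω hω => ht (by rw [← (Prod.mk.inj hω.2.2).1, hω.2.1]), zero_mul]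
  · simp

lemma condMI_eq_condMI_comp_add (hp : ∀ ω, 0 ≤ p ω) (U : Ω → γ) (X : Ω → α) (Y : Ω → β)
    (g : α → τ) :
    condMI p U X Y = condMI p U (fun ω => g (X ω)) Y + condMI p U X (fun ω => (g (X ω), Y ω)) := by
  rw [condMI_eq_sum hp, condMI_comp_eq_sum hp, condMI_cond_comp_eq_sum hp]
  simp only [← Finset.sum_add_distrib, ← mul_add]
  refine Finset.sum_congr rfl fun u _ => Finset.sum_congr rfl fun x _ =>
    Finset.sum_congr rfl fun y _ => ?_
  by_cases hx : pr p {ω | U ω = u ∧ X ω = x ∧ Y ω = y} = 0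
  · rw [hx, zero_mul, zero_mul]
  · have hUgXY : pr p {ω | U ω = u ∧ g (X ω) = g x ∧ Y ω = y} ≠ 0 :=
      pr_ne_zero_of_subset hp hx fun ω hω => ⟨hω.1, by rw [hω.2.1], hω.2.2⟩
    have hgXY : pr p {ω | g (X ω) = g x ∧ Y ω = y} ≠ 0 :=
      pr_ne_zero_of_subset hp hx fun ω hω => ⟨by rw [hω.2.1], hω.2.2⟩
    have hUY : pr p {ω | U ω = u ∧ Y ω = y} ≠ 0 :=
      pr_ne_zero_of_subset hp hx fun ω hω => ⟨hω.1, hω.2.2⟩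
    have hXY : pr p {ω | X ω = x ∧ Y ω = y} ≠ 0 := pr_ne_zero_of_subset hp hx fun ω hω => hω.2
    have hY : pr p {ω | Y ω = y} ≠ 0 := pr_ne_zero_of_subset hp hx fun ω hω => hω.2.2
    rw [log_div_mul_div hx hUY hXY hY, log_div_mul_div hUgXY hUY hgXY hY,
      log_div_mul_div hx hUgXY hXY hgXY]
    ring

lemma condMI_comp_le (hp : IsPMF p) (U : Ω → γ) (X : Ω → α) (Y : Ω → β) (g : α → τ) :
    condMI p U (fun ω => g (X ω)) Y ≤ condMI p U X Y := by
  rw [condMI_eq_condMI_comp_add hp.1 U X Y g]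
  exact le_add_of_nonneg_right (condMI_nonneg hp _ _ _)

lemma condMI_comp_eq_of_markovChain (hp : ∀ ω, 0 ≤ p ω) {U : Ω → γ} {X : Ω → α} {Y : Ω → β}
    (g : α → τ) (h : MarkovChain p U (fun ω => (g (X ω), Y ω)) X) :
    condMI p U (fun ω => g (X ω)) Y = condMI p U X Y := by
  rw [condMI_eq_condMI_comp_add hp U X Y g, condMI_eq_zero_of_markovChain hp h, add_zero]

end ChainRule

end ConditionalMutualInformation

section Reencoding

variable {𝒳 𝒴 𝒵 𝒰 : Type*} [Fintype 𝒳] [Fintype 𝒴] [Fintype 𝒵] [Fintype 𝒰]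
  {p : 𝒳 × 𝒴 × 𝒵 → ℝ} {q : 𝒳 × 𝒴 × 𝒵 × 𝒰 → ℝ}

lemma pr_source_preimage (hqp : ∀ x y z, ∑ u, q (x, y, z, u) = p (x, y, z))
    (s : Set (𝒳 × 𝒴 × 𝒵)) : pr q ((fun ω => (ω.1, ω.2.1, ω.2.2.1)) ⁻¹' s) = pr p s := by
  simp only [pr, Fintype.sum_prod_type, Set.mem_preimage]
  refine Finset.sum_congr rfl fun x _ => Finset.sum_congr rfl fun y _ =>
    Finset.sum_congr rfl fun z _ => ?_
  by_cases h : (x, y, z) ∈ s <;> simp [h, hqp]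

lemma pr_source_eq (hqp : ∀ x y z, ∑ u, q (x, y, z, u) = p (x, y, z)) (w : 𝒳 × 𝒴 × 𝒵) :
    pr q {ω | (ω.1, ω.2.1, ω.2.2.1) = w} = p w :=
  (pr_source_preimage hqp {w}).trans (pr_point w)

lemma MarkovChain.of_source (hqp : ∀ x y z, ∑ u, q (x, y, z, u) = p (x, y, z))
    {α β γ : Type*} {A : 𝒳 × 𝒴 × 𝒵 → α} {B : 𝒳 × 𝒴 × 𝒵 → β} {C : 𝒳 × 𝒴 × 𝒵 → γ}
    (h : MarkovChain p A B C) :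
    MarkovChain q (fun ω => A (ω.1, ω.2.1, ω.2.2.1)) (fun ω => B (ω.1, ω.2.1, ω.2.2.1))
      (fun ω => C (ω.1, ω.2.1, ω.2.2.1)) :=
  h.preimage _ (pr_source_preimage hqp)

variable (p q) {𝒯 : Type*} (T : 𝒳 → 𝒯)

/-- The joint distribution in which `U` is drawn from the channel `q(u | T x, y)`. -/
noncomputable def reencode : 𝒳 × 𝒴 × 𝒵 × 𝒰 → ℝ :=
  fun ω => p (ω.1, ω.2.1, ω.2.2.1) *
    condPr q (fun ω => ω.2.2.2) (fun ω => (T ω.1, ω.2.1)) ω.2.2.2 (T ω.1, ω.2.1)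

variable {p q T}

lemma sum_reencode (hq0 : ∀ ω, 0 ≤ q ω) (hqp : ∀ x y z, ∑ u, q (x, y, z, u) = p (x, y, z))
    (x : 𝒳) (y : 𝒴) (z : 𝒵) : ∑ u, reencode p q T (x, y, z, u) = p (x, y, z) := by
  simp only [reencode, ← Finset.mul_sum]
  -- Where `condPr` takes its junk value `0`, the weight `p (x, y, z)` vanishes anyway.
  by_cases hb : pr q {ω | (T ω.1, ω.2.1) = (T x, y)} = 0
  · have hxyz : p (x, y, z) = 0 := by
      rw [← pr_source_eq hqp]
      exact pr_eq_zero_of_subset hq0 hb fun ω hω => by simp_all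
    rw [hxyz, zero_mul]
  · rw [sum_condPr _ _ hb, mul_one]

lemma reencode_nonneg (hp0 : ∀ w, 0 ≤ p w) (hq0 : ∀ ω, 0 ≤ q ω) (ω : 𝒳 × 𝒴 × 𝒵 × 𝒰) :
    0 ≤ reencode p q T ω :=
  mul_nonneg (hp0 _) (condPr_nonneg hq0 _ _ _ _)

lemma reencode_isPMF (hp : IsPMF p) (hq : IsPMF q)
    (hqp : ∀ x y z, ∑ u, q (x, y, z, u) = p (x, y, z)) : IsPMF (reencode p q T) := by
  refine ⟨reencode_nonneg hp.1 hq.1, ?_⟩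
  have := hp.2
  simp only [Fintype.sum_prod_type] at this ⊢
  simpa only [sum_reencode hq.1 hqp] using this

lemma pr_reencode_source (hq0 : ∀ ω, 0 ≤ q ω) (hqp : ∀ x y z, ∑ u, q (x, y, z, u) = p (x, y, z))
    (s : Set (𝒳 × 𝒴 × 𝒵)) :
    pr (reencode p q T) ((fun ω => (ω.1, ω.2.1, ω.2.2.1)) ⁻¹' s) =
      pr q ((fun ω => (ω.1, ω.2.1, ω.2.2.1)) ⁻¹' s) := by
  rw [pr_source_preimage (sum_reencode hq0 hqp), pr_source_preimage hqp]

lemma pr_reencode_eq_condPr_mul (hq0 : ∀ ω, 0 ≤ q ω)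
    (hqp : ∀ x y z, ∑ u, q (x, y, z, u) = p (x, y, z)) (u : 𝒰) (b : 𝒯 × 𝒴) (w : 𝒳 × 𝒴 × 𝒵) :
    pr (reencode p q T) {ω | ω.2.2.2 = u ∧ (T ω.1, ω.2.1) = b ∧ (ω.1, ω.2.1, ω.2.2.1) = w} =
      condPr q (fun ω => ω.2.2.2) (fun ω => (T ω.1, ω.2.1)) u b *
        pr (reencode p q T) {ω | (T ω.1, ω.2.1) = b ∧ (ω.1, ω.2.1, ω.2.2.1) = w} := by
  obtain ⟨x, y, z⟩ := w
  by_cases hb : (T x, y) = b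
  · subst hb
    have e₁ : {ω : 𝒳 × 𝒴 × 𝒵 × 𝒰 |
        ω.2.2.2 = u ∧ (T ω.1, ω.2.1) = (T x, y) ∧ (ω.1, ω.2.1, ω.2.2.1) = (x, y, z)} =
        {ω | ω = (x, y, z, u)} := by
      ext ⟨x', y', z', u'⟩; simp only [Set.mem_ofPred_eq, Prod.mk.injEq]; aesop
    have e₂ : {ω : 𝒳 × 𝒴 × 𝒵 × 𝒰 | (T ω.1, ω.2.1) = (T x, y) ∧ (ω.1, ω.2.1, ω.2.2.1) = (x, y, z)} =
        {ω | (ω.1, ω.2.1, ω.2.2.1) = (x, y, z)} := by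
      ext ⟨x', y', z', u'⟩; simp only [Set.mem_ofPred_eq, Prod.mk.injEq]; aesop
    rw [e₁, e₂, pr_point, pr_source_eq (sum_reencode hq0 hqp), reencode, mul_comm]
  · have hw : ∀ ω : 𝒳 × 𝒴 × 𝒵 × 𝒰, (ω.1, ω.2.1, ω.2.2.1) = (x, y, z) → (T ω.1, ω.2.1) ≠ b :=
      fun ω hω => by simp only [Prod.mk.injEq] at hω; rw [hω.1, hω.2.1]; exact hb
    rw [pr_eq_zero_of_forall_notMem fun ω hω => hw ω hω.2.2 hω.2.1,
      pr_eq_zero_of_forall_notMem fun ω hω => hw ω hω.2 hω.1, mul_zero]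

lemma reencode_markovChain (hq0 : ∀ ω, 0 ≤ q ω)
    (hqp : ∀ x y z, ∑ u, q (x, y, z, u) = p (x, y, z)) :
    MarkovChain (reencode p q T) (fun ω => ω.2.2.2) (fun ω => (T ω.1, ω.2.1))
      (fun ω => (ω.1, ω.2.1, ω.2.2.1)) :=
  markovChain_of_forall_pr_eq_mul _ (pr_reencode_eq_condPr_mul hq0 hqp)

lemma pr_reencode_statistic_output (hq0 : ∀ ω, 0 ≤ q ω)
    (hqp : ∀ x y z, ∑ u, q (x, y, z, u) = p (x, y, z)) (b : 𝒯 × 𝒴) (u : 𝒰) :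
    pr (reencode p q T) {ω | (T ω.1, ω.2.1) = b ∧ ω.2.2.2 = u} =
      pr q {ω | (T ω.1, ω.2.1) = b ∧ ω.2.2.2 = u} := by
  have hB : pr (reencode p q T) {ω | (T ω.1, ω.2.1) = b} = pr q {ω | (T ω.1, ω.2.1) = b} :=
    pr_reencode_source hq0 hqp {w | (T w.1, w.2.1) = b}
  simp only [and_comm (a := (T _, _) = b)]
  rw [pr_eq_mul_of_forall_pr_eq_mul (pr_reencode_eq_condPr_mul hq0 hqp u b), hB, condPr]
  by_cases h0 : pr q {ω | (T ω.1, ω.2.1) = b} = 0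
  · rw [h0, mul_zero, pr_eq_zero_of_subset hq0 h0 fun ω hω => hω.2]
  · rw [div_mul_cancel₀ _ h0]

lemma pr_reencode_remote_statistic_output (hp0 : ∀ w, 0 ≤ p w) (hq0 : ∀ ω, 0 ≤ q ω)
    (hqp : ∀ x y z, ∑ u, q (x, y, z, u) = p (x, y, z))
    (hmk : MarkovChain q (fun ω => ω.2.2.1) (fun ω => (ω.1, ω.2.1)) (fun ω => ω.2.2.2))
    (hsuff : MarkovChain p (fun ω => ω.2.2) (fun ω => (T ω.1, ω.2.1)) (fun ω => (ω.1, ω.2.1)))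
    (z : 𝒵) (b : 𝒯 × 𝒴) (u : 𝒰) :
    pr (reencode p q T) {ω | ω.2.2.1 = z ∧ (T ω.1, ω.2.1) = b ∧ ω.2.2.2 = u} =
      pr q {ω | ω.2.2.1 = z ∧ (T ω.1, ω.2.1) = b ∧ ω.2.2.2 = u} := by
  have hQ : MarkovChain q (fun ω => ω.2.2.1) (fun ω => (T ω.1, ω.2.1)) (fun ω => ω.2.2.2) :=
    (hmk.contraction hq0 (fun c => (T c.1, c.2)) (hsuff.of_source hqp)).comp_right hq0 Prod.snd
  have hP : MarkovChain (reencode p q T) (fun ω => ω.2.2.1) (fun ω => (T ω.1, ω.2.1))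
      (fun ω => ω.2.2.2) :=
    ((reencode_markovChain hq0 hqp).comp_right (reencode_nonneg hp0 hq0) fun w => w.2.2).symm
  refine hP.pr_eq_of_pr_eq (reencode_nonneg hp0 hq0) hq0 hQ (fun z b => ?_)
    (pr_reencode_statistic_output hq0 hqp) z b u
  exact pr_reencode_source hq0 hqp {w | w.2.2 = z ∧ (T w.1, w.2.1) = b}

lemma sum_reencode_mul_distortion [Fintype 𝒯] {𝒵' : Type*} (hp0 : ∀ w, 0 ≤ p w)
    (hq0 : ∀ ω, 0 ≤ q ω)    (hqp : ∀ x y z, ∑ u, q (x, y, z, u) = p (x, y, z))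
    (hmk : MarkovChain q (fun ω => ω.2.2.1) (fun ω => (ω.1, ω.2.1)) (fun ω => ω.2.2.2))
    (hsuff : MarkovChain p (fun ω => ω.2.2) (fun ω => (T ω.1, ω.2.1)) (fun ω => (ω.1, ω.2.1)))
    (d : 𝒵 → 𝒵' → ℝ) (f : 𝒰 → 𝒴 → 𝒵') :
    ∑ ω, reencode p q T ω * d ω.2.2.1 (f ω.2.2.2 ω.2.1) =
      ∑ ω, q ω * d ω.2.2.1 (f ω.2.2.2 ω.2.1) := by
  let V : 𝒳 × 𝒴 × 𝒵 × 𝒰 → 𝒵 × (𝒯 × 𝒴) × 𝒰 := fun ω => (ω.2.2.1, (T ω.1, ω.2.1), ω.2.2.2)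
  let G : 𝒵 × (𝒯 × 𝒴) × 𝒰 → ℝ := fun v => d v.1 (f v.2.2 v.2.1.2)
  calc ∑ ω, reencode p q T ω * d ω.2.2.1 (f ω.2.2.2 ω.2.1)
      = ∑ v, pr (reencode p q T) {ω | V ω = v} * G v := sum_mul_comp_eq_sum_pr V G
    _ = ∑ v, pr q {ω | V ω = v} * G v := by
      refine Finset.sum_congr rfl fun ⟨z, b, u⟩ _ => ?_
      simp only [V, Prod.mk.injEq, pr_reencode_remote_statistic_output hp0 hq0 hqp hmk hsuff]
    _ = ∑ ω, q ω * d ω.2.2.1 (f ω.2.2.2 ω.2.1) := (sum_mul_comp_eq_sum_pr V G).symm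

lemma condMI_reencode [Fintype 𝒯] (hp0 : ∀ w, 0 ≤ p w) (hq0 : ∀ ω, 0 ≤ q ω)
    (hqp : ∀ x y z, ∑ u, q (x, y, z, u) = p (x, y, z))
    (hmk : MarkovChain q (fun ω => ω.2.2.1) (fun ω => (ω.1, ω.2.1)) (fun ω => ω.2.2.2))
    (hsuff : MarkovChain p (fun ω => ω.2.2) (fun ω => (T ω.1, ω.2.1)) (fun ω => (ω.1, ω.2.1))) :
    condMI (reencode p q T) (fun ω => T ω.1) (fun ω => ω.2.2.2) (fun ω => ω.2.1) =
      condMI q (fun ω => T ω.1) (fun ω => ω.2.2.2) (fun ω => ω.2.1) := by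
  refine condMI_congr fun t u y => ?_
  have e : ∀ r : 𝒳 × 𝒴 × 𝒵 × 𝒰 → ℝ, pr r {ω | T ω.1 = t ∧ ω.2.2.2 = u ∧ ω.2.1 = y} =
      ∑ z, pr r {ω | ω.2.2.1 = z ∧ (T ω.1, ω.2.1) = (t, y) ∧ ω.2.2.2 = u} := fun r => by
    rw [sum_pr_and]
    simp only [Prod.mk.injEq, and_comm, and_left_comm, and_assoc]
  rw [e, e]
  exact Finset.sum_congr rfl fun z _ =>
    pr_reencode_remote_statistic_output hp0 hq0 hqp hmk hsuff z (t, y) u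

end Reencoding

section StatisticEncoder

variable {𝒳 𝒴 𝒵 𝒰 𝒯 : Type*} [Fintype 𝒳] [Fintype 𝒴] [Fintype 𝒵] [Fintype 𝒰]
  {q : 𝒳 × 𝒴 × 𝒵 × 𝒰 → ℝ} {T : 𝒳 → 𝒯}

lemma MarkovChain.source_of_statistic (hq0 : ∀ ω, 0 ≤ q ω)
    (h : MarkovChain q (fun ω => ω.2.2.2) (fun ω => (T ω.1, ω.2.1))
      (fun ω => (ω.1, ω.2.1, ω.2.2.1))) :
    MarkovChain q (fun ω => ω.2.2.1) (fun ω => (ω.1, ω.2.1)) (fun ω => ω.2.2.2) :=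
  ((MarkovChain.refine_middle (W := fun ω => (ω.1, ω.2.1, ω.2.2.1)) hq0
    (fun w => (w.1, w.2.1)) (fun c => (T c.1, c.2)) h).comp_right hq0 fun w => w.2.2).symm

lemma condMI_statistic_eq [Fintype 𝒯] (hq0 : ∀ ω, 0 ≤ q ω)
    (h : MarkovChain q (fun ω => ω.2.2.2) (fun ω => (T ω.1, ω.2.1))
      (fun ω => (ω.1, ω.2.1, ω.2.2.1))) :
    condMI q (fun ω => T ω.1) (fun ω => ω.2.2.2) (fun ω => ω.2.1) =
      condMI q (fun ω => ω.1) (fun ω => ω.2.2.2) (fun ω => ω.2.1) := by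
  rw [condMI_symm hq0, condMI_symm hq0 fun ω => ω.1]
  exact condMI_comp_eq_of_markovChain hq0 T (h.comp_right hq0 fun w : 𝒳 × 𝒴 × 𝒵 => w.1)

end StatisticEncoder

theorem remote_rate_distortion_sufficient_statistic_general
    {𝒳 𝒴 𝒵 𝒵' 𝒯 : Type} [Fintype 𝒳] [Fintype 𝒴] [Fintype 𝒵] [Fintype 𝒵'] [Fintype 𝒯]
    (p : 𝒳 × 𝒴 × 𝒵 → ℝ) (hp : IsPMF p)
    (d : 𝒵 → 𝒵' → ℝ) (D : ℝ)
    (T : 𝒳 → 𝒯)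
    (hsuff : MarkovChain p (fun ω => ω.2.2) (fun ω => (T ω.1, ω.2.1))
      (fun ω => (ω.1, ω.2.1))) :
    sInf {r : ℝ | ∃ (𝒰 : Type) (_ : Fintype 𝒰) (q : 𝒳 × 𝒴 × 𝒵 × 𝒰 → ℝ)
        (f : 𝒰 → 𝒴 → 𝒵'),
        IsPMF q ∧ (∀ x y z, (∑ u, q (x, y, z, u)) = p (x, y, z)) ∧
        MarkovChain q (fun ω => ω.2.2.1) (fun ω => (ω.1, ω.2.1)) (fun ω => ω.2.2.2) ∧
        (∑ ω, q ω * d ω.2.2.1 (f ω.2.2.2 ω.2.1)) ≤ D ∧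
        r = condMI q (fun ω => ω.1) (fun ω => ω.2.2.2) (fun ω => ω.2.1)} =
      sInf {r : ℝ | ∃ (𝒰 : Type) (_ : Fintype 𝒰) (q : 𝒳 × 𝒴 × 𝒵 × 𝒰 → ℝ)
        (f : 𝒰 → 𝒴 → 𝒵'),
        IsPMF q ∧ (∀ x y z, (∑ u, q (x, y, z, u)) = p (x, y, z)) ∧
        MarkovChain q (fun ω => ω.2.2.2) (fun ω => (T ω.1, ω.2.1))
          (fun ω => (ω.1, ω.2.1, ω.2.2.1)) ∧
        (∑ ω, q ω * d ω.2.2.1 (f ω.2.2.2 ω.2.1)) ≤ D ∧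
        r = condMI q (fun ω => T ω.1) (fun ω => ω.2.2.2) (fun ω => ω.2.1)} := by
  refine csInf_eq_csInf_of_forall_exists_le ?_ ?_
  · rintro _ ⟨𝒰, _, q, f, hq, hqp, hmk, hdist, rfl⟩
    refine ⟨_, ⟨𝒰, _, reencode p q T, f, reencode_isPMF hp hq hqp, sum_reencode hq.1 hqp,
      reencode_markovChain hq.1 hqp, ?_, rfl⟩, ?_⟩
    · rwa [sum_reencode_mul_distortion hp.1 hq.1 hqp hmk hsuff]
    · rw [condMI_reencode hp.1 hq.1 hqp hmk hsuff, condMI_symm hq.1, condMI_symm hq.1 fun ω => ω.1]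
      exact condMI_comp_le hq _ _ _ T
  · rintro _ ⟨𝒰, _, q, f, hq, hqp, hmk, hdist, rfl⟩
    exact ⟨_, ⟨𝒰, _, q, f, hq, hqp, hmk.source_of_statistic hq.1, hdist, rfl⟩,
      (condMI_statistic_eq hq.1 hmk).ge⟩

/-- Theorem 7: if `T(X)` is conditionally sufficient for the remote source `Z` given `Y`
(Markov chain `Z – (T(X), Y) – (X, Y)`), then the remote rate-distortion function with encoder
observation `(X, Y)` and decoder side information `Y` equals the one with encoder
observation `(T(X), Y)`. -/
theorem remote_rate_distortion_sufficient_statistic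
    {𝒳 𝒴 𝒵 𝒵' 𝒯 : Type} [Fintype 𝒳] [Fintype 𝒴] [Fintype 𝒵] [Fintype 𝒵'] [Fintype 𝒯]
    (p : 𝒳 × 𝒴 × 𝒵 → ℝ) (hp : IsPMF p)
    (d : 𝒵 → 𝒵' → ℝ) (hd : ∀ z z', 0 ≤ d z z') (D : ℝ) (hD : 0 ≤ D)
    (T : 𝒳 → 𝒯)
    (hsuff : MarkovChain p (fun ω => ω.2.2) (fun ω => (T ω.1, ω.2.1))
      (fun ω => (ω.1, ω.2.1))) :
    sInf {r : ℝ | ∃ (𝒰 : Type) (_ : Fintype 𝒰) (q : 𝒳 × 𝒴 × 𝒵 × 𝒰 → ℝ)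
        (f : 𝒰 → 𝒴 → 𝒵'),
        IsPMF q ∧ (∀ x y z, (∑ u, q (x, y, z, u)) = p (x, y, z)) ∧
        MarkovChain q (fun ω => ω.2.2.1) (fun ω => (ω.1, ω.2.1)) (fun ω => ω.2.2.2) ∧
        (∑ ω, q ω * d ω.2.2.1 (f ω.2.2.2 ω.2.1)) ≤ D ∧
        r = condMI q (fun ω => ω.1) (fun ω => ω.2.2.2) (fun ω => ω.2.1)} =
      sInf {r : ℝ | ∃ (𝒰 : Type) (_ : Fintype 𝒰) (q : 𝒳 × 𝒴 × 𝒵 × 𝒰 → ℝ)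
        (f : 𝒰 → 𝒴 → 𝒵'),
        IsPMF q ∧ (∀ x y z, (∑ u, q (x, y, z, u)) = p (x, y, z)) ∧
        MarkovChain q (fun ω => ω.2.2.2) (fun ω => (T ω.1, ω.2.1))
          (fun ω => (ω.1, ω.2.1, ω.2.2.1)) ∧
        (∑ ω, q ω * d ω.2.2.1 (f ω.2.2.2 ω.2.1)) ≤ D ∧
        r = condMI q (fun ω => T ω.1) (fun ω => ω.2.2.2) (fun ω => ω.2.1)} :=
  remote_rate_distortion_sufficient_statistic_general p hp d D T hsuff
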